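/- arXiv:1810.10985 — 4 statements merged into one kernel-verified Lean document; each statement's English description precedes it below -/
import Mathlib

section
/- For integers ℓ ≥ 1 and m ≥ 2, the binomial coefficient C(ℓm, ℓ) satisfies C(ℓm, ℓ) ≥ m^(m(ℓ−1)+1) / (√ℓ · (m−1)^((m−1)(ℓ−1))). -/
/-!
Write `n! = sₙ √(2n) (n/e)ⁿ` with `sₙ = stirlingSeq n`. The main Stirling terms of
`(ℓm)! / (ℓ! (ℓ(m-1))!)` reproduce the right-hand side exactly, up to the factor
`s₁ s_{m-1} / s_m` that accounts for `m! = m (m-1)!`; hence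
`C(ℓm, ℓ) = RHS · s₁ s_{m-1} s_{ℓm} / (s_ℓ s_m s_{ℓ(m-1)})`.
This ratio is at least `1`: the sequence `s` decreases, and Robbins' bound
`log sₙ - log sₙ₊₁ ≤ 1 / (12 n (n+1))` caps the loss `log s_{ℓ(m-1)} - log s_{ℓm}` at `1/48`,
which the gain `log s₁ - log s_ℓ ≥ log s₁ - log s₂ ≥ 1/27` covers.
-/

open Real Stirling
open scoped Nat

namespace Stirling

lemma log_factorial_eq {n : ℕ} (hn : n ≠ 0) :
    log n ! = log (stirlingSeq n) + log (2 * n) / 2 + n * log n - n := by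
  rw [log_stirlingSeq_formula, log_div (by positivity) (exp_pos 1).ne', log_exp]
  ring

lemma log_stirlingSeq_one : log (stirlingSeq 1) = 1 - log 2 / 2 := by
  rw [stirlingSeq_one, log_div (exp_pos 1).ne' (by positivity), log_exp, log_sqrt zero_le_two]

lemma log_stirlingSeq_le_of_le {a b : ℕ} (ha : a ≠ 0) (hab : a ≤ b) :
    log (stirlingSeq b) ≤ log (stirlingSeq a) := by
  obtain ⟨a, rfl⟩ := Nat.exists_eq_succ_of_ne_zero ha
  obtain ⟨b, rfl⟩ : ∃ c, b = c + 1 := ⟨b - 1, by omega⟩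
  exact log_stirlingSeq'_antitone (by omega : a ≤ b)

lemma log_stirlingSeq_sub_le {a b : ℕ} (ha : a ≠ 0) (hab : a ≤ b) :
    log (stirlingSeq a) - log (stirlingSeq b) ≤ 1 / (12 * a) - 1 / (12 * b) := by
  induction b, hab using Nat.le_induction with
  | base => simp
  | succ b hab ih =>
    have hb : (b : ℝ) ≠ 0 := by exact_mod_cast (by omega : b ≠ 0)
    have htelescope : 1 / (12 * (b : ℝ) * (b + 1)) = 1 / (12 * b) - 1 / (12 * ((b + 1 : ℕ) : ℝ)) := by
      push_cast
      field_simp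
      ring
    linarith [log_stirlingSeq_sdiff_le b]

lemma one_div_27_le_log_stirlingSeq_sdiff_one :
    1 / 27 ≤ log (stirlingSeq 1) - log (stirlingSeq 2) := by
  have h := le_hasSum (log_stirlingSeq_sdiff_hasSum 0) 0 fun k _ ↦ by positivity
  norm_num [-stirlingSeq_one] at h
  exact h

lemma log_stirlingSeq_add_le {l m : ℕ} (hl : 2 ≤ l) (hm : 2 ≤ m) :
    log (stirlingSeq l) + log (stirlingSeq m) + log (stirlingSeq (l * (m - 1))) ≤
      log (stirlingSeq 1) + log (stirlingSeq (m - 1)) + log (stirlingSeq (l * m)) := by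
  have hloss : log (stirlingSeq (l * (m - 1))) - log (stirlingSeq (l * m)) ≤ 1 / 27 := by
    have hL : (2 : ℝ) ≤ l := by exact_mod_cast hl
    have hM : (2 : ℝ) ≤ m := by exact_mod_cast hm
    have hrobbins := log_stirlingSeq_sub_le (Nat.mul_ne_zero (by omega) (by omega : m - 1 ≠ 0))
      (Nat.mul_le_mul_left l (Nat.sub_le m 1))
    have hdiff : 1 / (12 * ((l * (m - 1) : ℕ) : ℝ)) - 1 / (12 * ((l * m : ℕ) : ℝ)) =
        1 / (12 * (l * (m * (m - 1)))) := by
      push_cast [Nat.cast_sub (by omega : 1 ≤ m)]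
      have : (m : ℝ) - 1 ≠ 0 := by linarith
      field_simp
      ring
    have hMM : (2 : ℝ) ≤ m * (m - 1) := by nlinarith
    refine hrobbins.trans ?_
    rw [hdiff, div_le_div_iff₀ (by positivity) (by norm_num)]
    nlinarith [mul_le_mul hL hMM (by norm_num) (by linarith)]
  linarith [one_div_27_le_log_stirlingSeq_sdiff_one, log_stirlingSeq_le_of_le two_ne_zero hl,
    log_stirlingSeq_le_of_le (by omega : m - 1 ≠ 0) (Nat.sub_le m 1)]

end Stirling

theorem log_choose_mul_eq {l m : ℕ} (hl : l ≠ 0) (hm : 2 ≤ m) :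
    log (Nat.choose (l * m) l) =
      log ((m : ℝ) ^ (m * (l - 1) + 1) / (√l * ((m : ℝ) - 1) ^ ((m - 1) * (l - 1)))) +
        (log (stirlingSeq 1) + log (stirlingSeq (m - 1)) + log (stirlingSeq (l * m)) -
          log (stirlingSeq l) - log (stirlingSeq m) - log (stirlingSeq (l * (m - 1)))) := by
  have hm1 : m - 1 ≠ 0 := by omega
  have hL : (0 : ℝ) < l := by positivity
  have hM1 : (0 : ℝ) < m - 1 := by
    rw [sub_pos]; exact_mod_cast hm
  have hchoose : (Nat.choose (l * m) l : ℝ) = (l * m)! / (l ! * (l * (m - 1))!) := by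
    rw [Nat.cast_choose ℝ (Nat.le_mul_of_pos_right l (by omega)), Nat.mul_sub_one]
  have hfact : log (m ! : ℝ) = log m + log (m - 1 : ℕ)! := by
    rw [← Nat.mul_factorial_pred (by omega : m ≠ 0), Nat.cast_mul,
      log_mul (by positivity) (by positivity)]
  have e_lm := log_factorial_eq (Nat.mul_ne_zero hl (by omega : m ≠ 0))
  have e_l := log_factorial_eq hl
  have e_k := log_factorial_eq (Nat.mul_ne_zero hl hm1)
  have e_m := log_factorial_eq (n := m) (by omega)
  have e_m1 := log_factorial_eq hm1
  rw [hchoose, log_div (by positivity) (by positivity), log_mul (by positivity) (by positivity),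
    log_div (by positivity) (by positivity), log_mul (by positivity) (by positivity), log_pow,
    log_pow, log_sqrt hL.le, log_stirlingSeq_one]
  push_cast [Nat.cast_sub (by omega : 1 ≤ m), Nat.cast_sub (by omega : 1 ≤ l)] at *
  rw [log_mul two_ne_zero (by positivity)] at e_lm e_l e_k e_m e_m1
  rw [log_mul (by positivity) (by positivity)] at e_lm e_k
  linear_combination e_lm - e_l - e_k - e_m + e_m1 + hfact

/-- Stirling combination bound: for `ℓ ≥ 1`, `m ≥ 2`,
`C(ℓm, ℓ) ≥ m^(m(ℓ−1)+1) / (√ℓ · (m−1)^((m−1)(ℓ−1)))`. -/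
theorem stmt4 (l m : ℕ) (hl : 1 ≤ l) (hm : 2 ≤ m) :
    (Nat.choose (l * m) l : ℝ)
      ≥ (m : ℝ) ^ (m * (l - 1) + 1) /
        (Real.sqrt l * ((m : ℝ) - 1) ^ ((m - 1) * (l - 1))) := by
  obtain rfl | hl2 := hl.eq_or_lt
  · simp
  have hM1 : (0 : ℝ) < m - 1 := by
    rw [sub_pos]; exact_mod_cast hm
  have hchoose : (0 : ℝ) < Nat.choose (l * m) l :=
    Nat.cast_pos.2 (Nat.choose_pos (Nat.le_mul_of_pos_right l (by omega)))
  rw [ge_iff_le, ← log_le_log_iff (by positivity) hchoose, log_choose_mul_eq (by omega) hm]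
  linarith [log_stirlingSeq_add_le hl2 hm]
end

section
/- Let X be uniformly distributed on {0, 1, ..., 2^w − 1} and let Y = 1 + ⌊m·X/2^w⌋ for a positive integer m ≤ 2^w. Then Y is uniformly distributed on {1, ..., m} if and only if m divides 2^w. -/
/-!
Every value of `x ↦ m * x / N` on `range N` lies in `range m`. If the `m` fibres have a common
size `c`, counting `range N` fibrewise gives `N = m * c`. Conversely, if `N = m * q` then
`m * x / N = x / q`, whose fibres are the blocks `[k q, (k + 1) q)` of size `q`.
-/

open Finset

lemma Nat.mul_div_lt_of_lt {m N x : ℕ} (hm : 0 < m) (hx : x < N) : m * x / N < m :=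
  Nat.div_lt_of_lt_mul (by rw [mul_comm N]; exact Nat.mul_lt_mul_of_pos_left hx hm)

lemma Finset.card_eq_mul_card_of_maps_to_of_card_fiber_eq {α β : Type*} [DecidableEq β]
    {f : α → β} {s : Finset α} {t : Finset β} (hf : ∀ a ∈ s, f a ∈ t) (n : ℕ)
    (hn : ∀ b ∈ t, #{a ∈ s | f a = b} = n) : #s = n * #t :=
  le_antisymm (card_le_mul_card_image_of_maps_to hf n fun b hb ↦ (hn b hb).le)
    (mul_card_image_le_card_of_maps_to hf n fun b hb ↦ (hn b hb).ge)

lemma Nat.card_filter_div_eq {n q k : ℕ} (hk : k < n) :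
    #{x ∈ range (n * q) | x / q = k} = q := by
  rcases Nat.eq_zero_or_pos q with rfl | hq
  · simp
  have hblock : {x ∈ range (n * q) | x / q = k} = Ico (k * q) (k * q + q) := by
    have : k * q + q ≤ n * q := by simpa [add_mul] using Nat.mul_le_mul_right q hk
    ext x
    simp only [mem_filter, mem_range, mem_Ico, Nat.div_eq_iff hq]
    omega
  simp [hblock]

section MultiplyFloor

variable {N m : ℕ}

lemma dvd_of_card_filter_one_add_mul_div_eq (hm : 0 < m)
    (huniform : ∀ y ∈ Icc 1 m, #{x ∈ range N | 1 + m * x / N = y} =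
      #{x ∈ range N | 1 + m * x / N = 1}) :
    m ∣ N := by
  have hmaps : ∀ x ∈ range N, 1 + m * x / N ∈ Icc 1 m := fun x hx ↦
    mem_Icc.mpr ⟨Nat.le_add_right _ _, by
      have := Nat.mul_div_lt_of_lt hm (mem_range.mp hx); omega⟩
  have hcount := card_eq_mul_card_of_maps_to_of_card_fiber_eq hmaps _ huniform
  rw [card_range, Nat.card_Icc, Nat.add_sub_cancel] at hcount
  exact Dvd.intro_left _ hcount.symm

lemma card_filter_one_add_mul_div_eq_of_dvd (hm : 0 < m) {q : ℕ} (hq : N = m * q) {y : ℕ}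
    (hy : y ∈ Icc 1 m) : #{x ∈ range N | 1 + m * x / N = y} = q := by
  have hy := mem_Icc.mp hy
  have hdiv : ∀ x, m * x / N = x / q := fun x ↦ by rw [hq, Nat.mul_div_mul_left _ _ hm]
  have hshift : ∀ x, 1 + m * x / N = y ↔ x / q = y - 1 := fun x ↦ by rw [hdiv]; omega
  rw [filter_congr fun x _ ↦ hshift x, hq]
  exact Nat.card_filter_div_eq (by omega)

end MultiplyFloor

theorem stmt10_general (w m : ℕ) (hm : 0 < m) :
    (∀ y₁ ∈ Finset.Icc 1 m, ∀ y₂ ∈ Finset.Icc 1 m,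
      ((Finset.range (2 ^ w)).filter (fun x => 1 + m * x / 2 ^ w = y₁)).card =
      ((Finset.range (2 ^ w)).filter (fun x => 1 + m * x / 2 ^ w = y₂)).card)
    ↔ m ∣ 2 ^ w := by
  constructor
  · intro huniform
    exact dvd_of_card_filter_one_add_mul_div_eq hm fun y hy ↦
      huniform y hy 1 (mem_Icc.mpr ⟨le_rfl, hm⟩)
  · rintro ⟨q, hq⟩ y₁ hy₁ y₂ hy₂
    rw [card_filter_one_add_mul_div_eq_of_dvd hm hq hy₁,
      card_filter_one_add_mul_div_eq_of_dvd hm hq hy₂]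

/-- For `X` uniform on `{0,…,2^w−1}` and `Y = 1 + ⌊m·X/2^w⌋` with `0 < m ≤ 2^w`,
`Y` is uniform on `{1,…,m}` iff `m ∣ 2^w`. -/
theorem stmt10 (w m : ℕ) (hm : 0 < m) (hm2 : m ≤ 2 ^ w) :
    (∀ y₁ ∈ Finset.Icc 1 m, ∀ y₂ ∈ Finset.Icc 1 m,
      ((Finset.range (2 ^ w)).filter (fun x => 1 + m * x / 2 ^ w = y₁)).card =
      ((Finset.range (2 ^ w)).filter (fun x => 1 + m * x / 2 ^ w = y₂)).card)
    ↔ m ∣ 2 ^ w :=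
  stmt10_general w m hm
end

section
/- Let X be uniform on {0, ..., 2^w − 1} and Y = 1 + ⌊m·X/2^w⌋ with m ≤ 2^w. For each y ∈ {1,...,m}, the number of x with Y = y is either ⌊2^w/m⌋ or ⌈2^w/m⌉; hence the ratio of the largest to smallest selection probability equals ⌈2^w/m⌉/⌊2^w/m⌋. -/
/-!
The `x` with `⌊m x / N⌋ = k` form the integer interval `[⌈N k / m⌉, ⌈N (k + 1) / m⌉)`, whose
length lies between `⌊N / m⌋` and `⌈N / m⌉` because `⌈a + b⌉` lies between `⌈a⌉ + ⌊b⌋` and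
`⌈a⌉ + ⌈b⌉`. The `m` fibre sizes add up to `N`, so the largest is at least `⌈N / m⌉` and the
smallest at most `⌊N / m⌋`.
-/

open Finset

namespace Nat

lemma ceilDiv_add_div_le_ceilDiv_add {m : ℕ} (hm : 0 < m) (a b : ℕ) :
    a ⌈/⌉ m + b / m ≤ (a + b) ⌈/⌉ m := by
  simp only [ceilDiv_eq_add_pred_div]
  rw [show a + b + m - 1 = a + m - 1 + b by omega]
  exact div_add_div_le_add_div

lemma ceilDiv_add_le {m : ℕ} (hm : 0 < m) (a b : ℕ) :
    (a + b) ⌈/⌉ m ≤ a ⌈/⌉ m + b ⌈/⌉ m := by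
  rw [ceilDiv_le_iff_le_mul hm, mul_add]
  exact add_le_add (le_smul_ceilDiv hm) (le_smul_ceilDiv hm)

lemma ceilDiv_le_div_add_one {m : ℕ} (hm : 0 < m) (a : ℕ) : a ⌈/⌉ m ≤ a / m + 1 :=
  (ceilDiv_le_iff_le_mul hm).2 (lt_mul_div_succ a hm).le

end Nat

section FiniteFamily

variable {ι : Type*} {s : Finset ι} {f : ι → ℕ} {n N : ℕ}

lemma Finset.sup_eq_ceilDiv_of_sum_eq (hn : 0 < n) (hs : #s = n) (hsum : ∑ i ∈ s, f i = N)
    (hle : ∀ i ∈ s, f i ≤ N ⌈/⌉ n) : s.sup f = N ⌈/⌉ n := by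
  refine le_antisymm (Finset.sup_le hle) ((ceilDiv_le_iff_le_mul hn).2 ?_)
  calc N = ∑ i ∈ s, f i := hsum.symm
    _ ≤ #s • s.sup f := sum_le_card_nsmul s f _ fun i hi => le_sup hi
    _ = n * s.sup f := by rw [hs, smul_eq_mul]

lemma Finset.inf'_eq_div_of_sum_eq (hne : s.Nonempty) (hs : #s = n) (hsum : ∑ i ∈ s, f i = N)
    (hge : ∀ i ∈ s, N / n ≤ f i) : s.inf' hne f = N / n := by
  refine le_antisymm ((Nat.le_div_iff_mul_le (hs ▸ hne.card_pos)).2 ?_) (le_inf' hne f hge)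
  calc s.inf' hne f * n = #s • s.inf' hne f := by rw [hs, smul_eq_mul, mul_comm]
    _ ≤ ∑ i ∈ s, f i := card_nsmul_le_sum s f _ fun i hi => inf'_le f hi
    _ = N := hsum

end FiniteFamily

section MultiplyAndFloor

variable {N m : ℕ}

lemma filter_mul_div_eq_eq_Ico (hmN : m ≤ N) {k : ℕ} (hk : k < m) :
    {x ∈ range N | m * x / N = k} = Ico (N * k ⌈/⌉ m) (N * (k + 1) ⌈/⌉ m) := by
  have hm : 0 < m := by omega
  have hN : 0 < N := by omega
  ext x
  have hlo : k ≤ m * x / N ↔ N * k ≤ m * x := by rw [Nat.le_div_iff_mul_le hN, mul_comm]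
  have hhi : m * x / N < k + 1 ↔ m * x < N * (k + 1) := by
    rw [Nat.div_lt_iff_lt_mul hN, mul_comm, mul_comm N]
  have hxN : m * x < N * (k + 1) → x < N := fun h =>
    Nat.lt_of_mul_lt_mul_left (h.trans_le (by rw [mul_comm m]; exact Nat.mul_le_mul_left N hk))
  simp only [mem_filter, mem_range, mem_Ico, ceilDiv_le_iff_le_mul hm, ← not_le]
  omega

lemma div_le_card_filter_one_add_mul_div_le_ceilDiv (hmN : m ≤ N) {y : ℕ} (hy : y ∈ Icc 1 m) :
    N / m ≤ #{x ∈ range N | 1 + m * x / N = y} ∧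
      #{x ∈ range N | 1 + m * x / N = y} ≤ N ⌈/⌉ m := by
  obtain ⟨k, rfl, hk⟩ : ∃ k, y = k + 1 ∧ k < m := by
    rw [mem_Icc] at hy
    exact ⟨y - 1, by omega, by omega⟩
  have hm : 0 < m := by omega
  have hshift : {x ∈ range N | 1 + m * x / N = k + 1} = {x ∈ range N | m * x / N = k} :=
    filter_congr fun x _ => by omega
  rw [hshift, filter_mul_div_eq_eq_Ico hmN hk, Nat.card_Ico, mul_add_one]
  have := Nat.ceilDiv_add_div_le_ceilDiv_add hm (N * k) N
  have := Nat.ceilDiv_add_le hm (N * k) N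
  omega

lemma sum_card_filter_one_add_mul_div (hm : 0 < m) :
    ∑ y ∈ Icc 1 m, #{x ∈ range N | 1 + m * x / N = y} = N := by
  rw [← card_eq_sum_card_fiberwise, card_range]
  intro x hx
  have hx : x < N := by simpa using hx
  have : m * x / N < m :=
    (Nat.div_lt_iff_lt_mul (by omega)).2 (Nat.mul_lt_mul_of_pos_left hx hm)
  simp only [coe_Icc, Set.mem_Icc]
  exact ⟨Nat.le_add_right 1 _, by omega⟩

end MultiplyAndFloor

/-- For the multiply-and-floor method, each value `y ∈ {1,…,m}` is hit either
`⌊2^w/m⌋` or `⌈2^w/m⌉` times, and the ratio of the largest to smallest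
selection probability is `⌈2^w/m⌉/⌊2^w/m⌋`. -/
theorem stmt11 (w m : ℕ) (hm : 0 < m) (hm2 : m ≤ 2 ^ w) :
    (∀ y ∈ Finset.Icc 1 m,
      ((Finset.range (2 ^ w)).filter (fun x => 1 + m * x / 2 ^ w = y)).card = 2 ^ w / m ∨
      ((Finset.range (2 ^ w)).filter (fun x => 1 + m * x / 2 ^ w = y)).card = (2 ^ w + m - 1) / m) ∧
    ((((Finset.Icc 1 m).sup
        (fun y => ((Finset.range (2 ^ w)).filter (fun x => 1 + m * x / 2 ^ w = y)).card) : ℕ) : ℝ) /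
      (((Finset.Icc 1 m).inf'
        (by exact Finset.nonempty_Icc.mpr hm)
        (fun y => ((Finset.range (2 ^ w)).filter (fun x => 1 + m * x / 2 ^ w = y)).card) : ℕ) : ℝ)
      = (((2 ^ w + m - 1) / m : ℕ) : ℝ) / ((2 ^ w / m : ℕ) : ℝ)) := by
  rw [← Nat.ceilDiv_eq_add_pred_div]
  have hbounds := fun y (hy : y ∈ Icc 1 m) => div_le_card_filter_one_add_mul_div_le_ceilDiv hm2 hy
  have hsum := sum_card_filter_one_add_mul_div (N := 2 ^ w) hm
  have hcard : #(Icc 1 m) = m := by simp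
  refine ⟨fun y hy => ?_, ?_⟩
  · have := Nat.ceilDiv_le_div_add_one hm (2 ^ w)
    have := hbounds y hy
    omega
  · rw [sup_eq_ceilDiv_of_sum_eq hm hcard hsum fun y hy => (hbounds y hy).2,
      inf'_eq_div_of_sum_eq _ hcard hsum fun y hy => (hbounds y hy).1]
end

section
/- The Hull–Dobell theorem (sufficiency): the LCG X_{n+1} = (a·X_n + c) mod m has full period m for every seed if c is coprime to m, a ≡ 1 mod p for every prime p dividing m, and a ≡ 1 mod 4 whenever 4 divides m. -/
/-- Partial geometric sum. -/
def geoS (a k : ℕ) : ℕ := ∑ i ∈ Finset.range k, a ^ i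

lemma geoS_succ (a k : ℕ) : geoS a (k + 1) = geoS a k + a ^ k :=
  Finset.sum_range_succ _ _

lemma geoS_zero (a : ℕ) : geoS a 0 = 0 := rfl

lemma geoS_one (a : ℕ) : geoS a 1 = 1 := by simp [geoS]

lemma geoS_add (a j k : ℕ) : geoS a (j + k) = geoS a j + a ^ j * geoS a k := by
  induction k with
  | zero => simp [geoS]
  | succ k ih =>
    rw [← add_assoc, geoS_succ, ih, geoS_succ, mul_add, pow_add, add_assoc]

lemma geoS_succ' (a k : ℕ) : geoS a (k + 1) = 1 + a * geoS a k := by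
  have := geoS_add a 1 k
  simpa [geoS_one, add_comm] using this

lemma geoS_mul (a n q : ℕ) : geoS a (n * q) = geoS a n * geoS (a ^ n) q := by
  induction q with
  | zero => simp [geoS]
  | succ q ih =>
    rw [Nat.mul_succ, geoS_add, ih, geoS_succ, mul_add, ← pow_mul]
    ring

lemma geoS_modEq (a n k : ℕ) (h : a ≡ 1 [MOD n]) : geoS a k ≡ k [MOD n] := by
  induction k with
  | zero => rfl
  | succ k ih =>
    rw [geoS_succ]
    calc geoS a k + a ^ k ≡ k + 1 ^ k [MOD n] := ih.add (h.pow k)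
      _ = k + 1 := by rw [one_pow]

lemma geoS_expand (d : ℕ) :
    ∀ k, geoS (1 + d) k ≡ k + (∑ i ∈ Finset.range k, i) * d [MOD d ^ 2] := by
  have pow_me : ∀ i, (1 + d) ^ i ≡ 1 + i * d [MOD d ^ 2] := by
    intro i
    induction i with
    | zero => simpa using Nat.ModEq.refl 1
    | succ i ih =>
      have h1 : (1 + d) ^ (i + 1) = (1 + d) ^ i * (1 + d) := by ring
      rw [h1]
      calc (1 + d) ^ i * (1 + d) ≡ (1 + i * d) * (1 + d) [MOD d ^ 2] :=
            ih.mul_right _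
        _ = (1 + (i + 1) * d) + i * d ^ 2 := by ring
        _ ≡ (1 + (i + 1) * d) + 0 [MOD d ^ 2] :=
            (Nat.ModEq.refl _).add ((Nat.modEq_zero_iff_dvd).2 (dvd_mul_left _ _))
        _ = 1 + (i + 1) * d := by ring
  intro k
  induction k with
  | zero => simpa [geoS] using Nat.ModEq.refl 0
  | succ k ih =>
    rw [geoS_succ, Finset.sum_range_succ]
    calc geoS (1 + d) k + (1 + d) ^ k
        ≡ (k + (∑ i ∈ Finset.range k, i) * d) + (1 + k * d) [MOD d ^ 2] :=
          ih.add (pow_me k)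
      _ = (k + 1) + ((∑ i ∈ Finset.range k, i) + k) * d := by ring

/-- For odd prime `p` dividing `a - 1`, `geoS a p ≡ p (mod p²)`. -/
lemma geoS_prime_odd (p a : ℕ) (hp : p.Prime) (hodd : p ≠ 2) (ha : 1 ≤ a)
    (h : p ∣ a - 1) : geoS a p ≡ p [MOD p ^ 2] := by
  set d := a - 1 with hd
  have had : a = 1 + d := by omega
  have hsum : p ∣ ∑ i ∈ Finset.range p, i := by
    have h2 : (∑ i ∈ Finset.range p, i) * 2 = p * (p - 1) := Finset.sum_range_id_mul_two p
    have hpd : p ∣ (∑ i ∈ Finset.range p, i) * 2 := h2 ▸ dvd_mul_right p (p - 1)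
    rcases (Nat.Prime.dvd_mul hp).1 hpd with h' | h'
    · exact h'
    · exact absurd ((Nat.prime_dvd_prime_iff_eq hp Nat.prime_two).1 h') hodd
  have key : geoS a p ≡ p + (∑ i ∈ Finset.range p, i) * d [MOD p ^ 2] := by
    have h1 : geoS a p ≡ p + (∑ i ∈ Finset.range p, i) * d [MOD d ^ 2] := by
      rw [had]; exact geoS_expand d p
    exact h1.of_dvd (pow_dvd_pow_of_dvd h 2)
  have h2 : p ^ 2 ∣ (∑ i ∈ Finset.range p, i) * d := by
    rw [pow_two]; exact mul_dvd_mul hsum h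
  calc geoS a p ≡ p + (∑ i ∈ Finset.range p, i) * d [MOD p ^ 2] := key
    _ ≡ p + 0 [MOD p ^ 2] := (Nat.ModEq.refl _).add ((Nat.modEq_zero_iff_dvd).2 h2)
    _ = p := by ring

/-- Factorization `geoS a p = p * u` with `p ∤ u`. -/
lemma geoS_prime_factor (p a : ℕ) (hp : p.Prime) (ha : 1 ≤ a)
    (h1 : a ≡ 1 [MOD p]) (h4 : p = 2 → a ≡ 1 [MOD 4]) :
    ∃ u : ℕ, geoS a p = p * u ∧ ¬ p ∣ u := by
  have key : geoS a p ≡ p [MOD p ^ 2] := by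
    by_cases h2 : p = 2
    · subst h2
      have hg : geoS a 2 = 1 + a := by simp [geoS, Finset.sum_range_succ]
      have : (1 : ℕ) + a ≡ 1 + 1 [MOD 4] := (Nat.ModEq.refl 1).add (h4 rfl)
      rw [hg]
      simpa using this
    · have hd : p ∣ a - 1 := (Nat.modEq_iff_dvd' ha).1 h1.symm
      exact geoS_prime_odd p a hp h2 ha hd
  have hge : p ≤ geoS a p := by
    have : ∑ i ∈ Finset.range p, 1 ≤ ∑ i ∈ Finset.range p, a ^ i :=
      Finset.sum_le_sum fun i _ => Nat.one_le_pow i a (by omega)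
    simpa [geoS] using this
  obtain ⟨s, hs⟩ := (Nat.modEq_iff_dvd' hge).1 key.symm
  refine ⟨1 + p * s, ?_, ?_⟩
  · have hp2 : p ^ 2 = p * p := by ring
    rw [hp2] at hs
    have hr : p * (1 + p * s) = p + p * p * s := by ring
    omega
  · intro hdvd
    have : p ∣ 1 := (Nat.dvd_add_right (dvd_mul_right p s)).1 (by rwa [add_comm] at hdvd)
    exact hp.one_lt.ne' (Nat.dvd_one.1 this)

/-- Key: `p^e ∣ geoS a k → p^e ∣ k`. -/
lemma geoS_pow_dvd (p : ℕ) (hp : p.Prime) :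
    ∀ e a k : ℕ, 1 ≤ a → a ≡ 1 [MOD p] → (p = 2 → 2 ≤ e → a ≡ 1 [MOD 4]) →
      p ^ e ∣ geoS a k → p ^ e ∣ k := by
  intro e
  induction e with
  | zero => simp
  | succ e ih =>
    intro a k ha h1 h4 hdvd
    have hpk : p ∣ k := by
      have hps : p ∣ geoS a k :=
        dvd_trans (dvd_pow_self p (Nat.succ_ne_zero e)) hdvd
      have := (geoS_modEq a p k h1).symm.trans ((Nat.modEq_zero_iff_dvd).2 hps)
      exact (Nat.modEq_zero_iff_dvd).1 this
    rcases Nat.eq_zero_or_pos e with he | he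
    · subst he; simpa using hpk
    obtain ⟨t, rfl⟩ := hpk
    rw [geoS_mul] at hdvd
    obtain ⟨u, hu, hpu⟩ := geoS_prime_factor p a hp ha h1 (fun h2 => h4 h2 (by omega))
    rw [hu, mul_assoc, pow_succ'] at hdvd
    have hd1 : p ^ e ∣ u * geoS (a ^ p) t :=
      (Nat.mul_dvd_mul_iff_left hp.pos).1 hdvd
    have hco : Nat.Coprime (p ^ e) u :=
      Nat.Coprime.pow_left e ((Nat.Prime.coprime_iff_not_dvd hp).2 hpu)
    have hd2 : p ^ e ∣ geoS (a ^ p) t := hco.dvd_of_dvd_mul_left hd1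
    have hd3 : p ^ e ∣ t := by
      apply ih (a ^ p) t (Nat.one_le_pow _ _ (by omega))
      · simpa using h1.pow p
      · intro h2 _
        simpa using (h4 h2 (by omega)).pow p
      · exact hd2
    rw [pow_succ']
    exact mul_dvd_mul_left p hd3

lemma geoS_self_dvd (p : ℕ) (hp : p.Prime) (a : ℕ) (h1 : a ≡ 1 [MOD p]) :
    ∀ e, p ^ e ∣ geoS a (p ^ e) := by
  intro e
  induction e with
  | zero => simp [geoS_one]
  | succ e ih =>
    rw [pow_succ, geoS_mul]
    apply mul_dvd_mul ih
    have hb : a ^ p ^ e ≡ 1 [MOD p] := by simpa using h1.pow (p ^ e)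
    have := (geoS_modEq (a ^ p ^ e) p p hb).trans (Nat.modEq_zero_iff_dvd.2 dvd_rfl)
    exact Nat.modEq_zero_iff_dvd.1 this

/-- The central divisibility equivalence. -/
lemma geoS_dvd_iff (m a : ℕ) (hm : 1 ≤ m)
    (ha : ∀ p : ℕ, p.Prime → p ∣ m → a % p = 1 % p)
    (ha4 : 4 ∣ m → a % 4 = 1) (k : ℕ) : m ∣ geoS a k ↔ m ∣ k := by
  rcases eq_or_lt_of_le hm with h1 | h2
  · simp [← h1]
  have ha1 : 1 ≤ a := by
    have hp := Nat.minFac_prime (by omega : m ≠ 1)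
    have := ha m.minFac hp (Nat.minFac_dvd m)
    have h1p : (1 : ℕ) % m.minFac = 1 := Nat.mod_eq_of_lt hp.one_lt
    rcases Nat.eq_zero_or_pos a with rfl | h; · simp [h1p] at this
    · exact h
  have hmod : ∀ p : ℕ, p.Prime → p ∣ m → a ≡ 1 [MOD p] := fun p hp hpm => ha p hp hpm
  constructor
  · intro h
    rw [Nat.dvd_iff_prime_pow_dvd_dvd]
    intro p e pp hpe
    have hp : p.Prime := pp
    rcases Nat.eq_zero_or_pos e with rfl | hepos
    · simp
    have hpm : p ∣ m := dvd_trans (dvd_pow_self p hepos.ne') hpe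
    apply geoS_pow_dvd p hp e a k ha1 (hmod p hp hpm)
    · intro h2 he2
      subst h2
      have h4m : 4 ∣ m := dvd_trans (by exact pow_dvd_pow 2 he2) hpe
      have := ha4 h4m
      show a % 4 = 1 % 4
      omega
    · exact dvd_trans hpe h
  · rintro ⟨t, rfl⟩
    rw [geoS_mul]
    apply dvd_mul_of_dvd_left
    rw [Nat.dvd_iff_prime_pow_dvd_dvd]
    intro p e pp hpe
    have hp : p.Prime := pp
    rcases Nat.eq_zero_or_pos e with rfl | hepos
    · simp
    have hpm : p ∣ m := dvd_trans (dvd_pow_self p hepos.ne') hpe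
    obtain ⟨r, hr⟩ := hpe
    rw [hr, geoS_mul]
    exact dvd_mul_of_dvd_left (geoS_self_dvd p hp a (hmod p hp hpm) e) _

/-- Hull–Dobell (sufficiency): if `c` is coprime to `m`, `a ≡ 1 (mod p)` for
every prime `p ∣ m`, and `a ≡ 1 (mod 4)` whenever `4 ∣ m`, then the LCG
`x ↦ a·x + c` on `Z/mZ` has full period `m` from every seed. -/
theorem stmt17 (m a c : ℕ) (hm : 1 ≤ m) (hc : Nat.Coprime c m)
    (ha : ∀ p : ℕ, p.Prime → p ∣ m → a % p = 1 % p)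
    (ha4 : 4 ∣ m → a % 4 = 1) :
    ∀ x : ZMod m,
      Set.range (fun k : ℕ => (fun y : ZMod m => (a : ZMod m) * y + (c : ZMod m))^[k] x)
        = Set.univ := by
  haveI : NeZero m := ⟨by omega⟩
  intro x
  set f : ZMod m → ZMod m := fun y : ZMod m => (a : ZMod m) * y + (c : ZMod m) with hf
  -- iterate formula
  have hiter : ∀ k : ℕ, f^[k] x = (a : ZMod m) ^ k * x + (geoS a k : ZMod m) * (c : ZMod m) := by
    intro k
    induction k with
    | zero => simp [geoS]
    | succ k ih =>
      rw [Function.iterate_succ_apply', ih, hf]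
      have hcast : ((geoS a (k + 1) : ℕ) : ZMod m)
          = 1 + (a : ZMod m) * (geoS a k : ZMod m) := by
        rw [geoS_succ']; push_cast; ring
      rw [hcast]
      push_cast
      ring
  -- a is a unit mod m
  have haco : Nat.Coprime a m := by
    by_contra hco
    have hg1 : Nat.gcd a m ≠ 1 := hco
    set p := (Nat.gcd a m).minFac with hp
    have hpp : p.Prime := Nat.minFac_prime hg1
    have hpa : p ∣ a := dvd_trans (Nat.minFac_dvd _) (Nat.gcd_dvd_left a m)
    have hpm : p ∣ m := dvd_trans (Nat.minFac_dvd _) (Nat.gcd_dvd_right a m)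
    have hmod := ha p hpp hpm
    have h1 : (1 : ℕ) % p = 1 := Nat.mod_eq_of_lt hpp.one_lt
    have h0 : a % p = 0 := Nat.mod_eq_zero_of_dvd hpa
    omega
  have hau : IsUnit (a : ZMod m) := (ZMod.isUnit_iff_coprime a m).2 haco
  -- f is injective
  have hfinj : Function.Injective f := by
    intro y z h
    rw [hf] at h
    have h2 : (a : ZMod m) * y = (a : ZMod m) * z := by
      have := add_right_cancel h
      exact this
    exact hau.mul_left_cancel h2
  -- the shifted seed is a unit
  have hu : IsUnit (((a : ZMod m) - 1) * x + (c : ZMod m)) := by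
    set u : ZMod m := ((a : ZMod m) - 1) * x + (c : ZMod m) with hudef
    rw [← ZMod.natCast_zmod_val u]
    rw [ZMod.isUnit_iff_coprime]
    by_contra hco
    have hg1 : Nat.gcd u.val m ≠ 1 := hco
    set p := (Nat.gcd u.val m).minFac with hp
    have hpp : p.Prime := Nat.minFac_prime hg1
    have hpu : p ∣ u.val := dvd_trans (Nat.minFac_dvd _) (Nat.gcd_dvd_left _ _)
    have hpm : p ∣ m := dvd_trans (Nat.minFac_dvd _) (Nat.gcd_dvd_right _ _)
    haveI : NeZero p := ⟨hpp.pos.ne'⟩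
    -- cast to ZMod p
    have hcast : (ZMod.castHom hpm (ZMod p)) u = 0 := by
      rw [← ZMod.natCast_zmod_val u, map_natCast]
      exact (ZMod.natCast_eq_zero_iff _ _).2 hpu
    have hap : ((a : ℕ) : ZMod p) = 1 := by
      have := ha p hpp hpm
      calc ((a : ℕ) : ZMod p) = ((a % p : ℕ) : ZMod p) := (ZMod.natCast_mod a p).symm
        _ = ((1 % p : ℕ) : ZMod p) := by rw [this]
        _ = ((1 : ℕ) : ZMod p) := ZMod.natCast_mod 1 p
        _ = 1 := Nat.cast_one
    have hcast2 : (ZMod.castHom hpm (ZMod p)) u = ((c : ℕ) : ZMod p) := by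
      rw [hudef]
      rw [map_add, map_mul, map_sub, map_one, map_natCast, map_natCast, hap]
      ring
    have hcp : p ∣ c := by
      rw [hcast2] at hcast
      exact (ZMod.natCast_eq_zero_iff _ _).1 hcast
    have : p ∣ Nat.gcd c m := Nat.dvd_gcd hcp hpm
    rw [hc] at this
    exact hpp.one_lt.ne' (Nat.dvd_one.1 this)
  -- fixed-point characterization
  have hfix : ∀ k : ℕ, f^[k] x = x ↔ m ∣ k := by
    intro k
    have hgeom : ((a : ZMod m) ^ k - 1)
        = (geoS a k : ZMod m) * ((a : ZMod m) - 1) := by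
      have h1 := geom_sum_mul (a : ZMod m) k
      have h2 : ((geoS a k : ℕ) : ZMod m) = ∑ i ∈ Finset.range k, (a : ZMod m) ^ i := by
        rw [geoS]; push_cast; rfl
      rw [h2]; exact h1.symm
    have hak : (a : ZMod m) ^ k
        = (geoS a k : ZMod m) * ((a : ZMod m) - 1) + 1 := by
      rw [← hgeom]; ring
    have hexpand : f^[k] x - x
        = (geoS a k : ZMod m) * (((a : ZMod m) - 1) * x + (c : ZMod m)) := by
      rw [hiter k, hak]; ring
    constructor
    · intro h
      have h0 : (geoS a k : ZMod m) * (((a : ZMod m) - 1) * x + (c : ZMod m)) = 0 := by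
        rw [← hexpand, h, sub_self]
      have hS : ((geoS a k : ℕ) : ZMod m) = 0 := by
        rcases hu with ⟨v, hv⟩
        rw [← hv] at h0
        have := congrArg (fun z => z * ((v⁻¹ : (ZMod m)ˣ) : ZMod m)) h0
        simpa [mul_assoc] using this
      have hdvd : m ∣ geoS a k := (ZMod.natCast_eq_zero_iff _ _).1 hS
      exact (geoS_dvd_iff m a hm ha ha4 k).1 hdvd
    · intro h
      have hdvd : m ∣ geoS a k := (geoS_dvd_iff m a hm ha ha4 k).2 h
      have hS : ((geoS a k : ℕ) : ZMod m) = 0 := (ZMod.natCast_eq_zero_iff _ _).2 hdvd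
      have h0 : f^[k] x - x = 0 := by rw [hexpand, hS, zero_mul]
      exact sub_eq_zero.1 h0
  -- the orbit map on ZMod m is injective, hence surjective
  have haux : ∀ j l : ℕ, j ≤ l → f^[j] x = f^[l] x → m ∣ l - j := by
    intro j l hjl h
    have hl : l = j + (l - j) := by omega
    rw [hl, Function.iterate_add_apply] at h
    have := (Function.Injective.iterate hfinj j) h.symm
    exact (hfix (l - j)).1 this
  have hinj : Function.Injective (fun n : ZMod m => f^[n.val] x) := by
    intro n1 n2 h
    simp only at h
    have hlt1 : n1.val < m := ZMod.val_lt n1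
    have hlt2 : n2.val < m := ZMod.val_lt n2
    have heq : n1.val = n2.val := by
      rcases le_total n1.val n2.val with hle | hle
      · have hd := haux _ _ hle h
        rcases Nat.eq_zero_or_pos (n2.val - n1.val) with h0 | hp
        · omega
        · have := Nat.le_of_dvd hp hd; omega
      · have hd := haux _ _ hle h.symm
        rcases Nat.eq_zero_or_pos (n1.val - n2.val) with h0 | hp
        · omega
        · have := Nat.le_of_dvd hp hd; omega
    exact ZMod.val_injective m heq
  have hsurj : Function.Surjective (fun n : ZMod m => f^[n.val] x) :=
    Finite.surjective_of_injective hinj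
  ext y
  simp only [Set.mem_range, Set.mem_univ, iff_true]
  obtain ⟨n, hn⟩ := hsurj y
  exact ⟨n.val, hn⟩
end
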